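/- Let T_{n;c} = T_n + c·T_{n−1}. For c ≠ 0 with c² ≠ 1: disc(T_{n;c}) = 2^{(n−1)(n−2)} (2n−1)^n (−c)^n / (1 − c²) · T_{n;c}(−((n−1)c² + n)/((2n−1)c)). -/

import Mathlib

/-!
Write `f = T_{n;c}`. Eliminating `T_n'` and `T_{n-1}'` by `(1 - x²) T_m' = m (T_{m-1} - x T_m)`
gives `(1 - x²) f' = T_{n-1} · ((2n-1)c x + (n-1)c² + n) - (n x + (n-1)c) f`.
Resultants against `f` are multiplicative and only see their second argument modulo `f`, so
`Res(f, 1 - x²) · Res(f, f') = lc(f) · Res(f, T_{n-1}) · Res(f, (2n-1)c x + (n-1)c² + n)`.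
Here `Res(f, 1 - x²) = ± f(1) f(-1) = 1 - c²`, the linear factor contributes the value of `f` at
its root `-((n-1)c² + n)/((2n-1)c)`, and `Res(f, T_{n-1}) = Res(T_n, T_{n-1}) = ± 2^{(n-1)(n-2)}`
by running Euclid's algorithm along the three-term recurrence.
-/

open Polynomial Polynomial.Chebyshev

/-- The resultant: `Res f g = lc(f)^(deg g) * ∏_{α root of f} g(α)`. -/
noncomputable def Res (f g : Polynomial ℂ) : ℂ :=
  f.leadingCoeff ^ g.natDegree * (f.roots.map (fun a => g.eval a)).prod

/-- The discriminant of a polynomial. -/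
noncomputable def disc (f : Polynomial ℂ) : ℂ :=
  (-1) ^ (f.natDegree * (f.natDegree - 1) / 2) / f.leadingCoeff * Res f (derivative f)

lemma neg_one_pow_sq {M : Type*} [Monoid M] [HasDistribNeg M] (m : ℕ) :
    ((-1 : M) ^ m) ^ 2 = 1 := by
  rw [pow_right_comm, neg_one_sq, one_pow]

noncomputable def Tc (R : Type*) [CommRing R] (n : ℤ) (c : R) : R[X] :=
  T R n + C c * T R (n - 1)

lemma Res_eq_resultant (f g : ℂ[X]) : Res f g = resultant f g :=
  (resultant_eq_prod_eval f g _ le_rfl (IsAlgClosed.splits f)).symm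

section CommRing
variable {R : Type*} [CommRing R]

lemma resultant_one_sub_X_sq {f : R[X]} {m : ℕ} (hf : f.natDegree ≤ m) :
    resultant f (1 - X ^ 2) m 2 = (-1) ^ m * f.eval 1 * f.eval (-1) := by
  nontriviality R
  have hfactor : (1 - X ^ 2 : R[X]) = C (-1) * ((X - C 1) * (X + C 1)) := by
    simp only [map_neg, C_1]; ring
  have hmul := resultant_mul_right f (X - C 1) (X + C 1) m hf
  rw [natDegree_X_sub_C, natDegree_X_add_C] at hmul
  rw [hfactor, resultant_C_mul_right, hmul, resultant_X_sub_C_right _ _ _ hf,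
    resultant_X_add_C_right _ _ _ hf]
  linear_combination (-1 : R) ^ m * f.eval 1 * f.eval (-1) * neg_one_pow_sq (M := R) m

lemma one_sub_X_sq_mul_derivative_Tc (n : ℤ) (c : R) :
    (1 - X ^ 2 : R[X]) * derivative (Tc R n c) =
      T R (n - 1) * (Polynomial.C ((2 * n - 1) * c) * X + Polynomial.C ((n - 1) * c ^ 2 + n)) -
        (Polynomial.C (n : R) * X + Polynomial.C ((n - 1) * c)) * Tc R n c := by
  have h1 := one_sub_X_sq_mul_derivative_T_eq_poly_in_T (R := R) (n - 1)
  have h2 := one_sub_X_sq_mul_derivative_T_eq_poly_in_T (R := R) (n - 2)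
  have h3 := T_sub_one R (n - 1)
  rw [sub_add_cancel] at h1
  rw [show n - 2 + 1 = n - 1 by ring] at h2
  rw [sub_add_cancel, show n - 1 - 1 = n - 2 by ring] at h3
  simp only [Tc, map_add, derivative_C_mul, map_mul, map_sub, map_pow, map_intCast, map_one,
    map_ofNat]
  push_cast at h1 h2 ⊢
  linear_combination h1 + C c * h2 + C c * (n - 1) * h3

lemma Tc_eval_one (n : ℤ) (c : R) : (Tc R n c).eval 1 = 1 + c := by
  simp [Tc]

lemma Tc_eval_neg_one (n : ℤ) (c : R) : (Tc R n c).eval (-1) = n.negOnePow * (1 - c) := by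
  simp only [Tc, eval_add, eval_mul, eval_C, T_eval_neg_one, Int.negOnePow_sub, Int.negOnePow_one]
  push_cast
  ring

end CommRing

lemma resultant_C_mul_X_add_C {K : Type*} [Field K] {f : K[X]} {m : ℕ} (hf : f.natDegree ≤ m)
    {a : K} (ha : a ≠ 0) (b : K) :
    resultant f (C a * X + C b) m 1 = (-a) ^ m * f.eval (-b / a) := by
  have hfactor : C a * X + C b = C a * (X + C (b / a)) := by
    rw [mul_add, ← Polynomial.C_mul, mul_div_cancel₀ _ ha]
  rw [hfactor, resultant_C_mul_right, resultant_X_add_C_right _ _ _ hf, neg_pow, neg_div]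
  ring

section IsDomain
variable {R : Type*} [CommRing R] [IsDomain R] [NeZero (2 : R)]

lemma resultant_T_add_two_T_add_one (j : ℕ) :
    resultant (T R (j + 2)) (T R (j + 1)) =
      (-1) ^ (j + 1) * (2 ^ j) ^ 2 * resultant (T R (j + 1)) (T R j) := by
  have hdeg (k : ℕ) : (T R k).natDegree = k := by simp
  have hdeg1 : (T R (j + 1)).natDegree = j + 1 := by exact_mod_cast hdeg (j + 1)
  have hdeg2 : (T R (j + 2)).natDegree = j + 2 := by exact_mod_cast hdeg (j + 2)
  have hrec : T R (j + 2) = - T R j + T R (j + 1) * (2 * X) := by rw [T_add_two]; ring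
  have hlc : (T R (j + 1)).coeff (j + 1) = 2 ^ j := by
    rw [← hdeg1, coeff_natDegree, leadingCoeff_T]; congr
  have hdegX : (2 * X : R[X]).natDegree ≤ 1 := by compute_degree
  rw [hdeg1, hdeg2, hdeg, hrec, resultant_add_mul_left _ _ _ _ _ (by omega) hdeg1.le,
    neg_eq_neg_one_mul, ← Polynomial.C_1, ← Polynomial.C_neg, resultant_C_mul_left,
    resultant_add_left_deg _ _ _ _ 2 (hdeg j).le, resultant_comm (T R j), hlc,
    (Nat.even_mul_succ_self j).neg_one_pow, ← pow_mul, pow_mul', neg_one_sq, one_pow]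
  ring

lemma resultant_T_add_one_T (j : ℕ) :
    resultant (T R (j + 1)) (T R j) = (-1) ^ ((j + 1) * j / 2) * 2 ^ (j * (j - 1)) := by
  induction j with
  | zero => simp
  | succ j ih =>
    push_cast
    rw [add_assoc, one_add_one_eq_two, resultant_T_add_two_T_add_one, ih]
    have hexp : (j + 1 + 1) * (j + 1) / 2 = (j + 1) * j / 2 + (j + 1) := by
      rw [show (j + 1 + 1) * (j + 1) = (j + 1) * j + 2 * (j + 1) by ring,
        Nat.add_mul_div_left _ _ two_pos]
    have hexp2 : j * 2 + j * (j - 1) = (j + 1) * j := by cases j <;> simp; ring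
    rw [hexp, pow_add, ← hexp2, pow_add, pow_mul]
    ring

lemma resultant_T_T_sub_one {n : ℕ} (hn : 1 ≤ n) :
    resultant (T R n) (T R (n - 1)) = (-1) ^ (n * (n - 1) / 2) * 2 ^ ((n - 1) * (n - 2)) := by
  obtain ⟨j, rfl⟩ : ∃ j, n = j + 1 := ⟨n - 1, by omega⟩
  rw [show ((j + 1 : ℕ) : ℤ) - 1 = j by push_cast; ring]
  simpa using resultant_T_add_one_T (R := R) j

lemma natDegree_T_natCast_sub_one {n : ℕ} (hn : 1 ≤ n) : (T R (n - 1)).natDegree = n - 1 := by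
  rw [natDegree_T]; omega

lemma natDegree_C_mul_T_lt {n : ℕ} (hn : 1 ≤ n) (c : R) :
    (C c * T R (n - 1)).natDegree < (T R n).natDegree := by
  have := natDegree_C_mul_le c (T R (n - 1))
  rw [natDegree_T_natCast_sub_one hn] at this
  rw [natDegree_T, Int.natAbs_natCast]; omega

lemma natDegree_Tc {n : ℕ} (hn : 1 ≤ n) (c : R) : (Tc R n c).natDegree = n := by
  rw [Tc, natDegree_add_eq_left_of_natDegree_lt (natDegree_C_mul_T_lt hn c)]; simp

lemma leadingCoeff_Tc {n : ℕ} (hn : 1 ≤ n) (c : R) : (Tc R n c).leadingCoeff = 2 ^ (n - 1) := by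
  rw [Tc, leadingCoeff_add_of_degree_lt' (degree_lt_degree (natDegree_C_mul_T_lt hn c))]; simp

lemma resultant_Tc_T {n : ℕ} (hn : 1 ≤ n) (c : R) :
    resultant (Tc R n c) (T R (n - 1)) n (n - 1) = resultant (T R n) (T R (n - 1)) := by
  rw [Tc, mul_comm, resultant_add_mul_left _ _ _ _ _ (by simp)
    (natDegree_T_natCast_sub_one hn).le]
  simp [natDegree_T_natCast_sub_one hn]

lemma resultant_Tc_one_sub_X_sq {n : ℕ} (hn : 1 ≤ n) (c : R) :
    resultant (Tc R n c) (1 - X ^ 2) n 2 = 1 - c ^ 2 := by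
  rw [resultant_one_sub_X_sq (natDegree_Tc hn c).le, Tc_eval_one, Tc_eval_neg_one,
    Int.coe_negOnePow, Int.natAbs_natCast]
  linear_combination (1 + c) * (1 - c) * neg_one_pow_sq (M := R) n

end IsDomain

lemma one_sub_sq_mul_resultant_Tc_derivative {K : Type*} [Field K] [CharZero K]
    {n : ℕ} (hn : 1 ≤ n) {c : K} (hc : c ≠ 0) :
    (1 - c ^ 2) * resultant (Tc K n c) (derivative (Tc K n c)) n (n - 1) =
      2 ^ (n - 1) * resultant (T K n) (T K (n - 1)) *
        ((-((2 * n - 1) * c)) ^ n *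
          (Tc K n c).eval (-((n - 1) * c ^ 2 + n) / ((2 * n - 1) * c))) := by
  set f := Tc K n c
  have hdeg : f.natDegree = n := natDegree_Tc hn c
  have hB : (2 * (n : K) - 1) * c ≠ 0 := by
    refine mul_ne_zero (fun h => ?_) hc
    have h2n : ((2 * n : ℕ) : K) = 1 := by push_cast; linear_combination h
    norm_cast at h2n
    omega
  set L : K[X] := Polynomial.C ((2 * n - 1) * c) * X + Polynomial.C ((n - 1) * c ^ 2 + n)
  set M : K[X] := Polynomial.C (n : K) * X + Polynomial.C ((n - 1) * c)
  have hdegL : L.natDegree = 1 := natDegree_linear hB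
  have hdegM : (-M).natDegree ≤ 1 := by rw [natDegree_neg]; exact natDegree_linear_le
  have hdegT : (T K (n - 1)).natDegree = n - 1 := natDegree_T_natCast_sub_one hn
  have hdeg1 : (1 - X ^ 2 : K[X]).natDegree = 2 := by compute_degree!
  have hdeg' : (derivative f).natDegree = n - 1 := by rw [natDegree_derivative, hdeg]
  have hid := one_sub_X_sq_mul_derivative_Tc (R := K) n c
  push_cast at hid
  have hlhs := resultant_mul_right f (1 - X ^ 2) (derivative f) n hdeg.le
  have hrhs := resultant_mul_right f (T K (n - 1)) L n hdeg.le
  rw [hdeg1, hdeg', hid] at hlhs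
  rw [hdegT, hdegL] at hrhs
  rw [sub_eq_add_neg, ← neg_mul, mul_comm (-M),
    resultant_add_mul_right _ _ _ _ _ (by omega) hdeg.le,
    show 2 + (n - 1) = (n - 1 + 1) + 1 by omega,
    resultant_add_right_deg _ _ _ _ 1 (natDegree_mul_le.trans (by rw [hdegT, hdegL])), hrhs]
    at hlhs
  have hlc : f.coeff n = 2 ^ (n - 1) := by rw [← leadingCoeff_Tc hn c, leadingCoeff, hdeg]
  rw [hlc, pow_one, resultant_Tc_T hn c, resultant_C_mul_X_add_C hdeg.le hB,
    resultant_Tc_one_sub_X_sq hn c] at hlhs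
  linear_combination -hlhs

theorem stmt_14 (n : ℕ) (hn : 1 ≤ n) (c : ℂ) (hc : c ≠ 0) (hc1 : c ^ 2 ≠ 1) :
    disc (T ℂ n + C c * T ℂ ((n : ℤ) - 1)) =
      2 ^ ((n - 1) * (n - 2)) * (2 * (n : ℂ) - 1) ^ n * (-c) ^ n / (1 - c ^ 2) *
        (T ℂ n + C c * T ℂ ((n : ℤ) - 1)).eval
          (-(((n : ℂ) - 1) * c ^ 2 + n) / ((2 * (n : ℂ) - 1) * c)) := by
  change disc (Tc ℂ n c) = _ * (Tc ℂ n c).eval _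
  have key := one_sub_sq_mul_resultant_Tc_derivative hn hc
  rw [resultant_T_T_sub_one hn, show -((2 * (n : ℂ) - 1) * c) = (2 * n - 1) * -c by ring,
    mul_pow] at key
  simp only [disc, Res_eq_resultant, natDegree_Tc hn, leadingCoeff_Tc hn, natDegree_derivative]
  rw [div_mul_eq_mul_div, div_mul_eq_mul_div, div_eq_div_iff (pow_ne_zero _ two_ne_zero)
    (sub_ne_zero.2 (Ne.symm hc1))]
  linear_combination (-1 : ℂ) ^ (n * (n - 1) / 2) * key + 2 ^ (n - 1) * 2 ^ ((n - 1) * (n - 2)) *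
    ((2 * (n : ℂ) - 1) ^ n * (-c) ^ n *
      (Tc ℂ n c).eval (-(((n : ℂ) - 1) * c ^ 2 + n) / ((2 * (n : ℂ) - 1) * c))) *
      neg_one_pow_sq (M := ℂ) (n * (n - 1) / 2)
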